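/- An LFSA S is strongly current-state opaque with respect to Q_S if and only if every state (q, x) reachable in the concurrent composition CC(S_ε, S_dss_obs^ε) with q ∈ Q_S satisfies x ≠ ∅. -/

import Mathlib

/-- A labeled finite-state automaton (LFSA): transition relation `δ`,
initial states `Q0`, labeling `lab` (where `none` stands for ε, i.e. unobservable). -/
structure LFSA (Q : Type*) (E : Type*) (A : Type*) where
  δ : Q → E → Q → Prop
  Q0 : Set Q
  lab : E → Option A

namespace LFSA

variable {Q Q1 Q2 E A : Type*}

/-- A run `q →s q'` over a finite event sequence. -/
inductive Run (S : LFSA Q E A) : Q → List E → Q → Prop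
  | nil (q : Q) : Run S q [] q
  | cons {q q' q'' : Q} {e : E} {s : List E} :
      S.δ q e q' → Run S q' s q'' → Run S q (e :: s) q''

/-- Output (label sequence) of an event sequence. -/
def out (S : LFSA Q E A) (s : List E) : List A := s.filterMap S.lab

/-- Generated finite language. -/
def L (S : LFSA Q E A) : Set (List E) := {s | ∃ q0 ∈ S.Q0, ∃ q, S.Run q0 s q}

/-- Current-state estimate after observing `σ`. -/
def M (S : LFSA Q E A) (σ : List A) : Set Q :=
  {q | ∃ q0 ∈ S.Q0, ∃ s : List E, S.out s = σ ∧ S.Run q0 s q}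

/-- Reachability via a nonempty event sequence. -/
def ReachPlus (S : LFSA Q E A) (q q' : Q) : Prop := ∃ s : List E, s ≠ [] ∧ S.Run q s q'

/-- There is a transition cycle reachable from `q` (a cycle at `q` itself counts). -/
def CycleReachableFrom (S : LFSA Q E A) (q : Q) : Prop :=
  ∃ p : Q, (p = q ∨ S.ReachPlus q p) ∧ ∃ s : List E, s ≠ [] ∧ S.Run p s p

/-- `*`-strong detectability. -/
def StarSD (S : LFSA Q E A) : Prop :=
  ∃ k : ℕ, 0 < k ∧ ∀ s ∈ S.L, ∀ σ : List A, σ <+: S.out s → k < σ.length →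
    ∃ q : Q, S.M σ = {q}

/-- ω-strong detectability. -/
def OmegaSD (S : LFSA Q E A) : Prop :=
  ∃ k : ℕ, 0 < k ∧ ∀ (s : ℕ → E) (ρ : ℕ → Q), ρ 0 ∈ S.Q0 →
    (∀ n : ℕ, S.δ (ρ n) (s n) (ρ (n + 1))) →
    ∀ (n : ℕ) (σ : List A), σ <+: S.out (List.ofFn (fun i : Fin n => s i)) →
      k < σ.length → ∃ q : Q, S.M σ = {q}

/-- Concurrent composition: observable transitions with equal labels synchronize,
unobservable transitions interleave. Events are pairs over `Option E` (`none` = ε). -/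
def CC (S1 : LFSA Q1 E A) (S2 : LFSA Q2 E A) :
    LFSA (Q1 × Q2) (Option E × Option E) A where
  δ p ev p' :=
    match ev with
    | (some e, some e') =>
        (∃ a : A, S1.lab e = some a ∧ S2.lab e' = some a) ∧
          S1.δ p.1 e p'.1 ∧ S2.δ p.2 e' p'.2
    | (some e, none) => S1.lab e = none ∧ S1.δ p.1 e p'.1 ∧ p.2 = p'.2
    | (none, some e') => S2.lab e' = none ∧ p.1 = p'.1 ∧ S2.δ p.2 e' p'.2
    | (none, none) => False
  Q0 := {p | p.1 ∈ S1.Q0 ∧ p.2 ∈ S2.Q0}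
  lab ev := ev.1.bind S1.lab

/-- Left projection of an event sequence of a concurrent composition. -/
def lproj (s : List (Option E × Option E)) : List E := s.filterMap Prod.fst

/-- Right projection of an event sequence of a concurrent composition. -/
def rproj (s : List (Option E × Option E)) : List E := s.filterMap Prod.snd

/-- Unobservable reach of a set of states. -/
def UR (S : LFSA Q E A) (X : Set Q) : Set Q :=
  {q | ∃ q0 ∈ X, ∃ s : List E, S.out s = [] ∧ S.Run q0 s q}

/-- One step of the observer (powerset construction). -/
def obsStep (S : LFSA Q E A) (x : Set Q) (a : A) : Set Q :=
  {q' | ∃ q ∈ x, ∃ (e : E) (p : Q), S.lab e = some a ∧ S.δ q e p ∧ q' ∈ S.UR {p}}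

/-- Observer run (deterministic). -/
def obsRun (S : LFSA Q E A) (x : Set Q) (σ : List A) : Set Q := σ.foldl S.obsStep x

/-- The concurrent composition `CC(S_ε, Obs^ε)` of `S` (with events relabeled by their
labels) and a deterministic observer with step function `ostep` and initial state `x0`:
observable transitions move both components, unobservable ones move only the left one. -/
def CCObs (S : LFSA Q E A) (ostep : Set Q → A → Set Q) (x0 : Set Q) :
    LFSA (Q × Set Q) E A where
  δ p e p' := S.δ p.1 e p'.1 ∧
    (∀ a : A, S.lab e = some a → p'.2 = ostep p.2 a) ∧
    (S.lab e = none → p'.2 = p.2)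
  Q0 := {p | p.1 ∈ S.Q0 ∧ p.2 = x0}
  lab := S.lab

/-- A state is reachable if it is an initial state or reachable from one. -/
def Reachable (S : LFSA Q E A) (q : Q) : Prop := ∃ q0 ∈ S.Q0, ∃ s : List E, S.Run q0 s q

/-- Restriction of an automaton to a set of allowed states. -/
def restrict (S : LFSA Q E A) (P : Set Q) : LFSA Q E A where
  δ q e q' := S.δ q e q' ∧ q ∈ P ∧ q' ∈ P
  Q0 := S.Q0 ∩ P
  lab := S.lab

/-- A run all of whose states (including endpoints) lie in `P`. -/
inductive RunIn (S : LFSA Q E A) (P : Set Q) : Q → List E → Q → Prop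
  | nil (q : Q) : q ∈ P → RunIn S P q [] q
  | cons {q q' q'' : Q} {e : E} {s : List E} :
      q ∈ P → S.δ q e q' → RunIn S P q' s q'' → RunIn S P q (e :: s) q''

/-- Normal subautomaton: all faulty transitions removed. -/
def Sn (S : LFSA Q E A) (Ef : Set E) : LFSA Q E A where
  δ q e q' := S.δ q e q' ∧ e ∉ Ef
  Q0 := S.Q0
  lab := S.lab

/-- Faulty subautomaton: faulty transitions together with all their
predecessor and successor transitions. -/
def Sf (S : LFSA Q E A) (Ef : Set E) : LFSA Q E A where
  δ q e q' := S.δ q e q' ∧ ∃ c f d, f ∈ Ef ∧ S.δ c f d ∧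
      ((q = c ∧ e = f ∧ q' = d) ∨ (c = q' ∨ S.ReachPlus q' c) ∨ (q = d ∨ S.ReachPlus d q))
  Q0 := S.Q0
  lab := S.lab

/-- `s` ends with a faulty event. -/
def EndsFaulty (Ef : Set E) (s : List E) : Prop := ∃ (t : List E) (e : E), e ∈ Ef ∧ s = t ++ [e]

/-- `E_f`-diagnosability. -/
def Diag (S : LFSA Q E A) (Ef : Set E) : Prop :=
  ∃ k : ℕ, ∀ s ∈ S.L, EndsFaulty Ef s → ∀ s' : List E, s ++ s' ∈ S.L → k < s'.length →
    ∀ s'' ∈ S.L, S.out s'' = S.out (s ++ s') → ∃ e ∈ Ef, e ∈ s''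

/-- `E_f`-predictability. -/
def Pred (S : LFSA Q E A) (Ef : Set E) : Prop :=
  ∃ k : ℕ, ∀ s ∈ S.L, EndsFaulty Ef s →
    ∃ s' : List E, s' <+: s ∧ (∀ e ∈ s', e ∉ Ef) ∧
      ∀ u v : List E, u ++ v ∈ S.L → S.out s' = S.out u → (∀ e ∈ u, e ∉ Ef) →
        k < v.length → ∃ e ∈ Ef, e ∈ v

/-- Current-state opacity. -/
def CSO (S : LFSA Q E A) (QS : Set Q) : Prop :=
  ∀ q0 ∈ S.Q0, ∀ (s : List E) (q : Q), S.Run q0 s q → q ∈ QS →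
    ∃ q0' ∈ S.Q0, ∃ (s' : List E) (q' : Q), S.Run q0' s' q' ∧ q' ∉ QS ∧ S.out s = S.out s'

/-- Initial-state opacity. -/
def ISO (S : LFSA Q E A) (QS : Set Q) : Prop :=
  ∀ q0 ∈ S.Q0 ∩ QS, ∀ (s : List E) (q : Q), S.Run q0 s q →
    ∃ q0' ∈ S.Q0 \ QS, ∃ (s' : List E) (q' : Q), S.Run q0' s' q' ∧ S.out s = S.out s'

/-- Infinite-step opacity. -/
def InfSO (S : LFSA Q E A) (QS : Set Q) : Prop :=
  ∀ q0 ∈ S.Q0, ∀ (s1 : List E) (q1 : Q) (s2 : List E) (q2 : Q),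
    S.Run q0 s1 q1 → S.Run q1 s2 q2 → q1 ∈ QS →
    ∃ q0' ∈ S.Q0, ∃ (s1' : List E) (q1' : Q) (s2' : List E) (q2' : Q),
      S.Run q0' s1' q1' ∧ S.Run q1' s2' q2' ∧ q1' ∉ QS ∧
        S.out s1 = S.out s1' ∧ S.out s2 = S.out s2'

/-- `K`-step opacity. -/
def KSO (S : LFSA Q E A) (QS : Set Q) (K : ℕ) : Prop :=
  ∀ q0 ∈ S.Q0, ∀ (s1 : List E) (q1 : Q) (s2 : List E) (q2 : Q),
    S.Run q0 s1 q1 → S.Run q1 s2 q2 → q1 ∈ QS → (S.out s2).length ≤ K →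
    ∃ q0' ∈ S.Q0, ∃ (s1' : List E) (q1' : Q) (s2' : List E) (q2' : Q),
      S.Run q0' s1' q1' ∧ S.Run q1' s2' q2' ∧ q1' ∉ QS ∧
        S.out s1 = S.out s1' ∧ S.out s2 = S.out s2'

/-- Strong current-state opacity: the matching run is entirely non-secret. -/
def SCSO (S : LFSA Q E A) (QS : Set Q) : Prop :=
  ∀ q0 ∈ S.Q0, ∀ (s : List E) (q : Q), S.Run q0 s q → q ∈ QS →
    ∃ q0' ∈ S.Q0, ∃ (s' : List E) (q' : Q), S.RunIn QSᶜ q0' s' q' ∧ S.out s = S.out s'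

/-- Strong initial-state opacity. -/
def SISO (S : LFSA Q E A) (QS : Set Q) : Prop :=
  ∀ q0 ∈ S.Q0 ∩ QS, ∀ (s : List E) (q : Q), S.Run q0 s q →
    ∃ q0' ∈ S.Q0 \ QS, ∃ (s' : List E) (q' : Q), S.RunIn QSᶜ q0' s' q' ∧ S.out s = S.out s'

/-- Strong infinite-step opacity. -/
def SInfSO (S : LFSA Q E A) (QS : Set Q) : Prop :=
  ∀ q0 ∈ S.Q0, ∀ (s1 : List E) (q1 : Q) (s2 : List E) (q2 : Q),
    S.Run q0 s1 q1 → S.Run q1 s2 q2 → q1 ∈ QS →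
    ∃ q0' ∈ S.Q0, ∃ (s1' : List E) (q1' : Q) (s2' : List E) (q2' : Q),
      S.RunIn QSᶜ q0' s1' q1' ∧ S.RunIn QSᶜ q1' s2' q2' ∧
        S.out s1 = S.out s1' ∧ S.out s2 = S.out s2'

/-- Strong `K`-step opacity. -/
def SKSO (S : LFSA Q E A) (QS : Set Q) (K : ℕ) : Prop :=
  ∀ q0 ∈ S.Q0, ∀ (s1 : List E) (q1 : Q) (s2 : List E) (q2 : Q),
    S.Run q0 s1 q1 → S.Run q1 s2 q2 → q1 ∈ QS → (S.out s2).length ≤ K →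
    ∃ q0' ∈ S.Q0, ∃ (s1' : List E) (q1' : Q) (s2' : List E) (q2' : Q),
      S.RunIn QSᶜ q0' s1' q1' ∧ S.RunIn QSᶜ q1' s2' q2' ∧
        S.out s1 = S.out s1' ∧ S.out s2 = S.out s2'

/-- Observer step of the secret-deleted subautomaton `S_dss`. -/
def dssObsStep (S : LFSA Q E A) (QS : Set Q) : Set Q → A → Set Q :=
  (S.restrict QSᶜ).obsStep

/-- Initial observer state of the secret-deleted subautomaton. -/
def dssInit (S : LFSA Q E A) (QS : Set Q) : Set Q :=
  (S.restrict QSᶜ).UR (S.restrict QSᶜ).Q0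

end LFSA

/-!
A secret state `q` reached with output `σ` is paired in `CC(S_ε, S_dss_obs^ε)` with the observer
state of `S_dss` after `σ`, which is exactly the set of states reached by non-secret runs with
output `σ`. So that set is nonempty precisely when some non-secret run produces `σ`, which is
the defining condition of strong current-state opacity.
-/

namespace LFSA

variable {Q E A : Type*} {S : LFSA Q E A}

theorem Run.append {q q' q'' : Q} {s t : List E} (h₁ : S.Run q s q') (h₂ : S.Run q' t q'') :
    S.Run q (s ++ t) q'' := by
  induction h₁ with
  | nil => exact h₂
  | cons hδ _ ih => exact .cons hδ (ih h₂)

theorem RunIn.mem_left {P : Set Q} {q q' : Q} {s : List E} (h : S.RunIn P q s q') : q ∈ P := by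
  cases h with
  | nil _ hq => exact hq
  | cons hq _ _ => exact hq

theorem runIn_iff_run_restrict {P : Set Q} {q q' : Q} {s : List E} :
    S.RunIn P q s q' ↔ q ∈ P ∧ (S.restrict P).Run q s q' := by
  constructor
  · intro h
    refine ⟨h.mem_left, ?_⟩
    induction h with
    | nil q _ => exact .nil q
    | cons hq hδ hrun ih => exact .cons ⟨hδ, hq, hrun.mem_left⟩ ih
  · rintro ⟨hq, h⟩
    induction h with
    | nil q => exact .nil q hq
    | cons hδ _ ih => exact .cons hq hδ.1 (ih hδ.2.2)

theorem Run.exists_split_of_out_eq_cons {s : List E} {q₀ q : Q} {a : A} {σ : List A}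
    (h : S.Run q₀ s q) (hout : S.out s = a :: σ) :
    ∃ u q₁ e p v, S.out u = [] ∧ S.Run q₀ u q₁ ∧ S.lab e = some a ∧ S.δ q₁ e p ∧
      S.out v = σ ∧ S.Run p v q := by
  induction h with
  | nil => simp [out] at hout
  | @cons q q' _ e s hδ hrun ih =>
    cases hl : S.lab e with
    | some b =>
      simp only [out, List.filterMap_cons, hl, List.cons.injEq] at hout
      obtain ⟨rfl, hs⟩ := hout
      exact ⟨[], q, e, q', s, rfl, .nil q, hl, hδ, hs, hrun⟩
    | none =>
      simp only [out, List.filterMap_cons, hl] at hout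
      obtain ⟨u, q₁, e', p, v, hu, hru, hle, hδ', hv, hrv⟩ := ih hout
      refine ⟨e :: u, q₁, e', p, v, ?_, .cons hδ hru, hle, hδ', hv, hrv⟩
      simpa only [out, List.filterMap_cons, hl] using hu

theorem obsStep_UR (X : Set Q) (a : A) :
    S.obsStep (S.UR X) a = S.UR {p | ∃ q ∈ S.UR X, ∃ e, S.lab e = some a ∧ S.δ q e p} := by
  ext q'
  constructor
  · rintro ⟨q, hq, e, p, hle, hδ, _, rfl, w, hw, hrw⟩
    exact ⟨_, ⟨q, hq, e, hle, hδ⟩, w, hw, hrw⟩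
  · rintro ⟨p, ⟨q, hq, e, hle, hδ⟩, w, hw, hrw⟩
    exact ⟨q, hq, e, p, hle, hδ, p, rfl, w, hw, hrw⟩

theorem mem_obsRun_UR_iff (σ : List A) (X : Set Q) (q : Q) :
    q ∈ S.obsRun (S.UR X) σ ↔ ∃ q₀ ∈ X, ∃ s, S.out s = σ ∧ S.Run q₀ s q := by
  induction σ generalizing X with
  | nil => exact Iff.rfl
  | cons a σ ih =>
    change q ∈ S.obsRun (S.obsStep (S.UR X) a) σ ↔ _
    rw [obsStep_UR, ih]
    constructor
    · rintro ⟨p, ⟨q₁, ⟨q₀, hq₀, u, hu, hru⟩, e, hle, hδ⟩, v, hv, hrv⟩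
      refine ⟨q₀, hq₀, u ++ e :: v, ?_, hru.append (.cons hδ hrv)⟩
      simp only [out, List.filterMap_append, List.filterMap_cons, hle] at hu hv ⊢
      rw [hu, hv, List.nil_append]
    · rintro ⟨q₀, hq₀, s, hs, hrs⟩
      obtain ⟨u, q₁, e, p, v, hu, hru, hle, hδ, hv, hrv⟩ := hrs.exists_split_of_out_eq_cons hs
      exact ⟨p, ⟨q₁, ⟨q₀, hq₀, u, hu, hru⟩, e, hle, hδ⟩, v, hv, hrv⟩

theorem foldl_out_cons (f : Set Q → A → Set Q) (x : Set Q) (e : E) (s : List E) :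
    (S.out (e :: s)).foldl f x = (S.out s).foldl f ((S.lab e).elim x (f x)) := by
  cases hl : S.lab e <;> simp [out, hl]

section CCObs

variable {ostep : Set Q → A → Set Q} {x₀ : Set Q}

theorem Run.of_CCObs {p p' : Q × Set Q} {s : List E} (h : (S.CCObs ostep x₀).Run p s p') :
    S.Run p.1 s p'.1 ∧ p'.2 = (S.out s).foldl ostep p.2 := by
  induction h with
  | nil => exact ⟨.nil _, rfl⟩
  | @cons p p₁ _ e s hδ _ ih =>
    obtain ⟨hδ, hobs, hsil⟩ := hδ
    refine ⟨.cons hδ ih.1, ih.2.trans ?_⟩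
    rw [foldl_out_cons]
    cases hl : S.lab e with
    | none => rw [hsil hl]; rfl
    | some a => rw [hobs a hl]; rfl

theorem Run.lift_CCObs {q q' : Q} {s : List E} (h : S.Run q s q') (x : Set Q) :
    (S.CCObs ostep x₀).Run (q, x) s (q', (S.out s).foldl ostep x) := by
  induction h generalizing x with
  | nil => exact .nil _
  | @cons q q₁ _ e s hδ _ ih =>
    rw [foldl_out_cons]
    refine .cons ⟨hδ, fun a ha => ?_, fun ha => ?_⟩ (ih _) <;> simp [ha]

theorem reachable_CCObs_iff {p : Q × Set Q} :
    (S.CCObs ostep x₀).Reachable p ↔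
      ∃ q₀ ∈ S.Q0, ∃ s, S.Run q₀ s p.1 ∧ p.2 = (S.out s).foldl ostep x₀ := by
  constructor
  · rintro ⟨⟨q₀, _⟩, ⟨hq₀, rfl⟩, s, hrun⟩
    exact ⟨q₀, hq₀, s, hrun.of_CCObs⟩
  · obtain ⟨q, x⟩ := p
    rintro ⟨q₀, hq₀, s, hrun, rfl : x = _⟩
    exact ⟨(q₀, x₀), ⟨hq₀, rfl⟩, s, hrun.lift_CCObs x₀⟩

end CCObs

theorem nonempty_foldl_dssObsStep_iff (QS : Set Q) (σ : List A) :
    (σ.foldl (S.dssObsStep QS) (S.dssInit QS)).Nonempty ↔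
      ∃ q₀ ∈ S.Q0, ∃ s q, S.RunIn QSᶜ q₀ s q ∧ σ = S.out s := by
  -- `S.restrict P` keeps the labelling, so its `out` is `S.out` definitionally.
  change (∃ q, q ∈ (S.restrict QSᶜ).obsRun ((S.restrict QSᶜ).UR (S.restrict QSᶜ).Q0) σ) ↔ _
  simp only [mem_obsRun_UR_iff, runIn_iff_run_restrict]
  constructor
  · rintro ⟨q, q₀, ⟨hq₀, hq₀S⟩, s, hs, hrun⟩
    exact ⟨q₀, hq₀, s, q, ⟨hq₀S, hrun⟩, hs.symm⟩
  · rintro ⟨q₀, hq₀, s, q, ⟨hq₀S, hrun⟩, hs⟩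
    exact ⟨q, q₀, ⟨hq₀, hq₀S⟩, s, hs.symm, hrun⟩

end LFSA

/-- concurrent-composition characterization of strong
current-state opacity. -/
theorem stmt14 {Q E A : Type*} (S : LFSA Q E A) (QS : Set Q) :
    S.SCSO QS ↔
      ∀ p : Q × Set Q,
        (S.CCObs (S.dssObsStep QS) (S.dssInit QS)).Reachable p →
          p.1 ∈ QS → p.2.Nonempty := by
  simp only [LFSA.reachable_CCObs_iff]
  constructor
  · rintro hS ⟨q, x⟩ ⟨q₀, hq₀, s, hrun, rfl⟩ hq
    exact (LFSA.nonempty_foldl_dssObsStep_iff QS _).2 (hS q₀ hq₀ s q hrun hq)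
  · intro h q₀ hq₀ s q hrun hq
    exact (LFSA.nonempty_foldl_dssObsStep_iff QS _).1 (h (q, _) ⟨q₀, hq₀, s, hrun, rfl⟩ hq)
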